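/- Two-point testing bound (bounded case): Suppose ‖f‖_∞ ≤ B_F for all f ∈ F, and we test H₀: f̄ = f vs H₁: f̄ = g where n‖f − g‖²_{L2(P_X)} ≥ C²δ² for some C > 3. The test ψ(Y⃗) = 1(‖Y⃗ − f(X⃗)‖₂² ≥ ‖Y⃗ − g(X⃗)‖₂²) satisfies: the maximum of sup over f̄ with n‖f − f̄‖²_{L2(P_X)} < δ² of P_{f̄}(ψ = 1), and sup over f̄ with n‖g − f̄‖²_{L2(P_X)} < δ² of P_{f̄}(ψ = 0), is at most 3·exp(−L(C, σ, B_F)·δ²), where L(C, σ, B_F) = min{ (√(C²−1) − 2√2)²/(8σ²), 3/(64 B_F²), 3/(16 B_F² (3C² + 1)) }. -/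

import Mathlib

open MeasureTheory ProbabilityTheory ENNReal

noncomputable section

/-- The `L2(P_X)` distance between two functions. -/
def dist2 {X : Type*} [MeasurableSpace X] (μ : Measure X) (f g : X → ℝ) : ℝ :=
  Real.sqrt (∫ x, (f x - g x) ^ 2 ∂μ)

/-- Largest cardinality of an `r`-packing of `S` in the `L2(μ)` norm. -/
def packNum {X : Type*} [MeasurableSpace X] (μ : Measure X) (r : ℝ)
    (S : Set (X → ℝ)) : ℝ≥0∞ :=
  ⨆ (T : Finset (X → ℝ)) (_ : ↑T ⊆ S ∧
      ∀ f ∈ T, ∀ g ∈ T, f ≠ g → r < dist2 μ f g), (T.card : ℝ≥0∞)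

/-- Local packing number `M^loc_F(ε, c)`. -/
def Mloc {X : Type*} [MeasurableSpace X] (μ : Measure X) (F : Set (X → ℝ))
    (ε c : ℝ) : ℝ≥0∞ :=
  ⨆ f ∈ F, packNum μ (ε / c) ({g | dist2 μ f g ≤ ε} ∩ F)

/-- Joint law of the data `((X_1,…,X_n),(Y_1,…,Y_n))` where the `X_i` are i.i.d. `μ` and
`Y_i = f(X_i) + ξ_i` with `ξ_i` i.i.d. `N(0,σ²)` independent of the `X_i`. -/
def jointLaw {X : Type*} [MeasurableSpace X] (μ : Measure X) [IsProbabilityMeasure μ]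
    (σ : ℝ) (n : ℕ) (f : X → ℝ) : Measure ((Fin n → X) × (Fin n → ℝ)) :=
  ((Measure.pi fun _ : Fin n => μ).prod
      (Measure.pi fun _ : Fin n => gaussianReal 0 ⟨σ ^ 2, sq_nonneg σ⟩)).map
    fun p => (p.1, fun i => f (p.1 i) + p.2 i)

/-- Minimax risk over `F` for the squared `L2(μ)` loss. -/
def minimaxRisk {X : Type*} [MeasurableSpace X] (μ : Measure X) [IsProbabilityMeasure μ]
    (σ : ℝ) (n : ℕ) (F : Set (X → ℝ)) : ℝ≥0∞ :=
  ⨅ (fhat : (Fin n → X) × (Fin n → ℝ) → X → ℝ)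
    (_ : Measurable fhat ∧ ∀ dat, fhat dat ∈ F),
    ⨆ f ∈ F, ∫⁻ dat, ENNReal.ofReal ((dist2 μ (fhat dat) f) ^ 2) ∂(jointLaw μ σ n f)


/-- The exponent constant `L(C, σ, B_F)` of equation (2.2). -/
def Lconst (C σ B : ℝ) : ℝ :=
  min (min ((Real.sqrt (C ^ 2 - 1) - 2 * Real.sqrt 2) ^ 2 / (8 * σ ^ 2))
      (3 / (64 * B ^ 2)))
    (3 / (16 * B ^ 2 * (3 * C ^ 2 + 1)))

/-!
Under `f̄` the test wrongly prefers `g` only if the Gaussian linear form `∑ 2 (g - f)(Xᵢ) ξᵢ`,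
of variance `4σ²S` with `S = ∑ (f - g)(Xᵢ)²`, reaches `S - 2 ∑ (f - f̄)(Xᵢ)(f - g)(Xᵢ)`.
By Cauchy–Schwarz this threshold is at least `√S (√S - 2√A)` with `A = ∑ (f - f̄)(Xᵢ)²`.
Unless the design is atypical (`S ≤ (C² - 1)δ²` or `A ≥ 2δ²`), this is
`≥ √S (√(C² - 1) - 2√2) δ`, and the Gaussian tail gives `exp (-(√(C² - 1) - 2√2)² δ² / (8σ²))`.
The two atypical designs are large deviations of sums of i.i.d. variables in `[0, 4B²]`,
bounded by Chernoff's method with `eᵘ ≤ 1 + u + u²` on `|u| ≤ 1`; they cost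
`exp (-δ² / (16B²C²))` and `exp (-δ² / (16B²))`, and `L(C, σ, B)` is below all three rates.
-/

open Real
open scoped NNReal

lemma Real.exp_le_one_add_add_sq {u : ℝ} (hu : |u| ≤ 1) : exp u ≤ 1 + u + u ^ 2 := by
  linarith [(abs_le.mp (abs_exp_sub_one_sub_id_le hu)).2]

lemma abs_sum_le_card_mul {ι : Type*} [Fintype ι] {g : ι → ℝ} {K : ℝ} (h0 : ∀ i, 0 ≤ g i)
    (hK : ∀ i, g i ≤ K) : |∑ i, g i| ≤ Fintype.card ι * K := by
  rw [abs_of_nonneg (Finset.sum_nonneg fun i _ => h0 i)]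
  simpa using Finset.sum_le_sum fun i (_ : i ∈ Finset.univ) => hK i

section BoundedMGF

variable {α : Type*} [MeasurableSpace α] {κ : Measure α} {h : α → ℝ} {K : ℝ}

lemma integrable_exp_mul_of_abs_le_const [IsFiniteMeasure κ] (hh : Measurable h)
    (hK : ∀ a, |h a| ≤ K) (t : ℝ) : Integrable (fun a => exp (t * h a)) κ := by
  refine .of_bound (by fun_prop) (exp (|t| * K)) (ae_of_all _ fun a => ?_)
  rw [Real.norm_eq_abs, abs_exp, exp_le_exp]
  exact (le_abs_self _).trans ((abs_mul t (h a)).trans_le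
    (mul_le_mul_of_nonneg_left (hK a) (abs_nonneg t)))

variable [IsProbabilityMeasure κ] {t : ℝ}

lemma mgf_le_exp_of_nonneg_of_le (hh : Measurable h) (h0 : ∀ a, 0 ≤ h a) (hK : ∀ a, h a ≤ K)
    (htK : |t| * K ≤ 1) : mgf h κ t ≤ exp ((t + t ^ 2 * K) * κ[h]) := by
  have habs : ∀ a, |h a| ≤ K := fun a => (abs_of_nonneg (h0 a)).trans_le (hK a)
  -- `(t h)² ≤ t² K h` turns the quadratic term back into a multiple of `h`
  have hpt : ∀ a, exp (t * h a) ≤ 1 + (t + t ^ 2 * K) * h a := fun a => by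
    have htha : |t * h a| ≤ 1 := by
      rw [abs_mul]
      exact (mul_le_mul_of_nonneg_left (habs a) (abs_nonneg t)).trans htK
    nlinarith [exp_le_one_add_add_sq htha, mul_le_mul_of_nonneg_left (hK a) (h0 a), sq_nonneg t]
  have hint : Integrable h κ := .of_bound hh.aestronglyMeasurable K (ae_of_all _ habs)
  calc mgf h κ t = ∫ a, exp (t * h a) ∂κ := rfl
    _ ≤ ∫ a, (1 + (t + t ^ 2 * K) * h a) ∂κ :=
        integral_mono (integrable_exp_mul_of_abs_le_const hh habs t)
          ((integrable_const 1).add (hint.const_mul _)) hpt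
    _ = 1 + (t + t ^ 2 * K) * κ[h] := by
        rw [integral_add (integrable_const 1) (hint.const_mul _), integral_const_mul]
        simp
    _ ≤ exp ((t + t ^ 2 * K) * κ[h]) := by linarith [add_one_le_exp ((t + t ^ 2 * K) * κ[h])]

variable {ι : Type*} [Fintype ι]

lemma mgf_pi_sum (hh : Measurable h) (t : ℝ) :
    mgf (fun x : ι → α => ∑ i, h (x i)) (Measure.pi fun _ => κ) t
      = mgf h κ t ^ Fintype.card ι := by
  have hind : iIndepFun (fun i (x : ι → α) => h (x i)) (Measure.pi fun _ => κ) :=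
    iIndepFun_pi fun _ => hh.aemeasurable
  have hsum := hind.mgf_sum (fun i => hh.comp (measurable_pi_apply i)) Finset.univ (t := t)
  have heval : ∀ i, mgf (fun x : ι → α => h (x i)) (Measure.pi fun _ => κ) t = mgf h κ t := by
    intro i
    have hmap := mgf_map (X := h) (t := t) (measurable_pi_apply i).aemeasurable
      (μ := Measure.pi fun _ : ι => κ) (by fun_prop)
    rwa [(measurePreserving_eval (fun _ => κ) i).map_eq, eq_comm] at hmap
  simp only [Finset.sum_fn, heval, Finset.prod_const, Finset.card_univ] at hsum
  exact hsum

lemma measureReal_pi_sum_ge_le (hh : Measurable h) (h0 : ∀ a, 0 ≤ h a) (hK : ∀ a, h a ≤ K)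
    (ht : 0 ≤ t) (htK : t * K ≤ 1) (s : ℝ) :
    (Measure.pi fun _ : ι => κ).real {x | s ≤ ∑ i, h (x i)}
      ≤ exp (-t * s + Fintype.card ι * ((t + t ^ 2 * K) * κ[h])) := by
  have hint := integrable_exp_mul_of_abs_le_const (κ := Measure.pi fun _ : ι => κ)
    (by fun_prop) (fun x => abs_sum_le_card_mul (fun i => h0 (x i)) (fun i => hK (x i))) t
  refine (measure_ge_le_exp_mul_mgf s ht hint).trans ?_
  rw [mgf_pi_sum hh, exp_add, exp_nat_mul]
  gcongr
  · exact mgf_nonneg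
  · exact mgf_le_exp_of_nonneg_of_le hh h0 hK (by rwa [abs_of_nonneg ht])

lemma measureReal_pi_sum_le_le (hh : Measurable h) (h0 : ∀ a, 0 ≤ h a) (hK : ∀ a, h a ≤ K)
    (ht : t ≤ 0) (htK : -t * K ≤ 1) (s : ℝ) :
    (Measure.pi fun _ : ι => κ).real {x | ∑ i, h (x i) ≤ s}
      ≤ exp (-t * s + Fintype.card ι * ((t + t ^ 2 * K) * κ[h])) := by
  have hint := integrable_exp_mul_of_abs_le_const (κ := Measure.pi fun _ : ι => κ)
    (by fun_prop) (fun x => abs_sum_le_card_mul (fun i => h0 (x i)) (fun i => hK (x i))) t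
  refine (measure_le_le_exp_mul_mgf s ht hint).trans ?_
  rw [mgf_pi_sum hh, exp_add, exp_nat_mul]
  gcongr
  · exact mgf_nonneg
  · exact mgf_le_exp_of_nonneg_of_le hh h0 hK (by rwa [abs_of_nonpos ht])

lemma measureReal_pi_sum_ge_two_mul_le (hh : Measurable h) (h0 : ∀ a, 0 ≤ h a)
    (hK : ∀ a, h a ≤ K) (hKpos : 0 < K) {δ : ℝ} (hmean : Fintype.card ι * κ[h] ≤ δ ^ 2) :
    (Measure.pi fun _ : ι => κ).real {x | 2 * δ ^ 2 ≤ ∑ i, h (x i)}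
      ≤ exp (-(δ ^ 2 / (4 * K))) := by
  refine (measureReal_pi_sum_ge_le hh h0 hK (t := 1 / (2 * K)) (by positivity)
    (by field_simp; norm_num) _).trans (exp_le_exp.mpr ?_)
  have hcoef : 1 / (2 * K) + (1 / (2 * K)) ^ 2 * K = 3 / (4 * K) := by field_simp; ring
  rw [hcoef, mul_left_comm]
  have := mul_le_mul_of_nonneg_left hmean (by positivity : (0 : ℝ) ≤ 3 / (4 * K))
  have h' : -(1 / (2 * K)) * (2 * δ ^ 2) + 3 / (4 * K) * δ ^ 2 = -(δ ^ 2 / (4 * K)) := by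
    field_simp; ring
  linarith

lemma measureReal_pi_sum_le_sq_sub_one_mul_le (hh : Measurable h) (h0 : ∀ a, 0 ≤ h a)
    (hK : ∀ a, h a ≤ K) (hKpos : 0 < K) {C δ : ℝ} (hC : 1 ≤ C)
    (hmean : C ^ 2 * δ ^ 2 ≤ Fintype.card ι * κ[h]) :
    (Measure.pi fun _ : ι => κ).real {x | ∑ i, h (x i) ≤ (C ^ 2 - 1) * δ ^ 2}
      ≤ exp (-(δ ^ 2 / (4 * K * C ^ 2))) := by
  have hC2 : 1 ≤ C ^ 2 := one_le_pow₀ hC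
  -- `t = -1 / (2KC²)` minimises the Chernoff exponent once `n κ[h] ≥ C²δ²` is inserted
  refine (measureReal_pi_sum_le_le hh h0 hK (t := -(1 / (2 * K * C ^ 2)))
    (neg_nonpos.mpr (by positivity)) ?_ _).trans (exp_le_exp.mpr ?_)
  · rw [neg_neg, div_mul_eq_mul_div, one_mul, div_le_one (by positivity)]
    nlinarith
  have hcoef : -(1 / (2 * K * C ^ 2)) + (-(1 / (2 * K * C ^ 2))) ^ 2 * K
      = -((2 * C ^ 2 - 1) / (4 * K * C ^ 4)) := by field_simp; ring
  have hnonneg : 0 ≤ (2 * C ^ 2 - 1) / (4 * K * C ^ 4) := by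
    apply div_nonneg (by linarith) (by positivity)
  rw [hcoef]
  have := mul_le_mul_of_nonneg_left hmean hnonneg
  have h' : -(-(1 / (2 * K * C ^ 2))) * ((C ^ 2 - 1) * δ ^ 2)
      - (2 * C ^ 2 - 1) / (4 * K * C ^ 4) * (C ^ 2 * δ ^ 2) = -(δ ^ 2 / (4 * K * C ^ 2)) := by
    field_simp; ring
  linarith

end BoundedMGF

section Gaussian

variable {ι : Type*} [Fintype ι]

lemma hasSubgaussianMGF_gaussianReal (v : ℝ≥0) :
    HasSubgaussianMGF (fun x => x) v (gaussianReal 0 v) where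
  integrable_exp_mul := integrable_exp_mul_gaussianReal
  mgf_le t := by simp [mgf_fun_id_gaussianReal]

lemma measureReal_pi_gaussianReal_sum_mul_ge_le (v : ℝ≥0) (a : ι → ℝ) {ε : ℝ} (hε : 0 ≤ ε) :
    (Measure.pi fun _ : ι => gaussianReal 0 v).real {ξ | ε ≤ ∑ i, a i * ξ i}
      ≤ exp (-ε ^ 2 / (2 * (v * ∑ i, a i ^ 2))) := by
  have hsubG : ∀ i ∈ Finset.univ, HasSubgaussianMGF (fun ξ : ι → ℝ => a i * ξ i)
      (⟨a i ^ 2, sq_nonneg _⟩ * v) (Measure.pi fun _ : ι => gaussianReal 0 v) := fun i _ => by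
    have hi := (hasSubgaussianMGF_gaussianReal v).const_mul (a i)
    rw [← (measurePreserving_eval (fun _ => gaussianReal 0 v) i).map_eq] at hi
    exact hi.of_map (measurable_pi_apply i).aemeasurable
  have hind : iIndepFun (fun i (ξ : ι → ℝ) => a i * ξ i)
      (Measure.pi fun _ => gaussianReal 0 v) :=
    iIndepFun_pi (X := fun i (s : ℝ) => a i * s) fun _ => by fun_prop
  convert HasSubgaussianMGF.measure_sum_ge_le_of_iIndepFun hind hsubG hε using 4
  rw [NNReal.coe_sum, Finset.mul_sum]
  exact Finset.sum_congr rfl fun i _ => mul_comm _ _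

end Gaussian

section Test

variable {ι : Type*} [Fintype ι]

lemma sqrt_mul_sub_le_of_sum_sq_le {u w b ξ : ι → ℝ}
    (htest : ∑ i, (b i + ξ i - w i) ^ 2 ≤ ∑ i, (b i + ξ i - u i) ^ 2) :
    √(∑ i, (u i - w i) ^ 2) * (√(∑ i, (u i - w i) ^ 2) - 2 * √(∑ i, (u i - b i) ^ 2))
      ≤ ∑ i, 2 * (w i - u i) * ξ i := by
  have hexpand : ∑ i, (b i + ξ i - u i) ^ 2 - ∑ i, (b i + ξ i - w i) ^ 2
      = ∑ i, 2 * (w i - u i) * ξ i + 2 * ∑ i, (u i - w i) * (u i - b i)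
        - ∑ i, (u i - w i) ^ 2 := by
    simp only [← Finset.sum_sub_distrib, Finset.mul_sum, ← Finset.sum_add_distrib]
    exact Finset.sum_congr rfl fun i _ => by ring
  have hcs :=
    Real.sum_mul_le_sqrt_mul_sqrt Finset.univ (fun i => u i - w i) (fun i => u i - b i)
  rw [mul_sub, Real.mul_self_sqrt (Finset.sum_nonneg fun i _ => sq_nonneg _)]
  linarith

lemma measureReal_pi_gaussianReal_sum_sq_le_le (v : ℝ≥0) (u w b : ι → ℝ)
    (hsep : 2 * √(∑ i, (u i - b i) ^ 2) ≤ √(∑ i, (u i - w i) ^ 2)) :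
    (Measure.pi fun _ : ι => gaussianReal 0 v).real
        {ξ | ∑ i, (b i + ξ i - w i) ^ 2 ≤ ∑ i, (b i + ξ i - u i) ^ 2}
      ≤ exp (-((√(∑ i, (u i - w i) ^ 2) - 2 * √(∑ i, (u i - b i) ^ 2)) ^ 2 / (8 * v))) := by
  set S := ∑ i, (u i - w i) ^ 2
  set A := ∑ i, (u i - b i) ^ 2
  have hε : 0 ≤ √S * (√S - 2 * √A) := mul_nonneg (sqrt_nonneg S) (by linarith)
  refine (measureReal_mono fun ξ hξ => sqrt_mul_sub_le_of_sum_sq_le hξ).trans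
    ((measureReal_pi_gaussianReal_sum_mul_ge_le v (fun i => 2 * (w i - u i)) hε).trans_eq ?_)
  have hsum : ∑ i, (2 * (w i - u i)) ^ 2 = 4 * S := by
    rw [Finset.mul_sum]; exact Finset.sum_congr rfl fun i _ => by ring
  rw [hsum]
  congr 2
  rcases eq_or_ne S 0 with hS | hS
  · have hA : √A = 0 := le_antisymm (by rw [hS, sqrt_zero] at hsep; linarith) (sqrt_nonneg A)
    simp [hS, hA]
  · rw [mul_pow, sq_sqrt (Finset.sum_nonneg fun i _ => sq_nonneg _)]
    field_simp
    ring

end Test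

lemma Lconst_le_sqrt_sub_sq_div (C σ B : ℝ) :
    Lconst C σ B ≤ (√(C ^ 2 - 1) - 2 * √2) ^ 2 / (8 * σ ^ 2) :=
  (min_le_left _ _).trans (min_le_left _ _)

lemma Lconst_le_one_div_sixteen_mul_sq (C σ : ℝ) {B : ℝ} (hB : 0 < B) :
    Lconst C σ B ≤ 1 / (16 * B ^ 2) := by
  refine ((min_le_left _ _).trans (min_le_right _ _)).trans ?_
  rw [div_le_div_iff₀ (by positivity) (by positivity)]
  nlinarith [sq_nonneg B]

lemma Lconst_le_one_div_sixteen_mul_sq_mul_sq (C σ : ℝ) {B : ℝ} (hB : 0 < B) (hC : C ≠ 0) :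
    Lconst C σ B ≤ 1 / (16 * B ^ 2 * C ^ 2) := by
  refine (min_le_right _ _).trans ?_
  rw [div_le_div_iff₀ (by positivity) (by positivity)]
  nlinarith [pow_pos hB 2]

lemma Lconst_mul_sq_le_sq_div {C σ B δ D : ℝ} (hρ : 0 ≤ (√(C ^ 2 - 1) - 2 * √2) * δ)
    (hD : (√(C ^ 2 - 1) - 2 * √2) * δ ≤ D) : Lconst C σ B * δ ^ 2 ≤ D ^ 2 / (8 * σ ^ 2) :=
  calc Lconst C σ B * δ ^ 2 ≤ (√(C ^ 2 - 1) - 2 * √2) ^ 2 / (8 * σ ^ 2) * δ ^ 2 := by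
        gcongr; exact Lconst_le_sqrt_sub_sq_div C σ B
    _ = ((√(C ^ 2 - 1) - 2 * √2) * δ) ^ 2 / (8 * σ ^ 2) := by ring
    _ ≤ D ^ 2 / (8 * σ ^ 2) := by gcongr

lemma sqrt_sub_two_mul_sqrt_ge {C δ S A : ℝ} (hC : 1 ≤ C) (hδ : 0 ≤ δ)
    (hS : (C ^ 2 - 1) * δ ^ 2 ≤ S) (hA : A ≤ 2 * δ ^ 2) :
    (√(C ^ 2 - 1) - 2 * √2) * δ ≤ √S - 2 * √A := by
  have hS' : √(C ^ 2 - 1) * δ ≤ √S := by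
    rw [← sqrt_sq hδ, ← sqrt_mul (by nlinarith)]
    exact sqrt_le_sqrt hS
  have hA' : √A ≤ √2 * δ := by
    rw [← sqrt_sq hδ, ← sqrt_mul zero_le_two]
    exact sqrt_le_sqrt hA
  linarith

lemma two_mul_sqrt_two_le_sqrt_sq_sub_one {C : ℝ} (hC : 3 ≤ C) : 2 * √2 ≤ √(C ^ 2 - 1) := by
  rw [le_sqrt' (by positivity), mul_pow, sq_sqrt zero_le_two]
  nlinarith

lemma measure_pi_gaussianReal_test_le {ι : Type*} [Fintype ι] (σ B : ℝ) {C δ : ℝ} (hC : 3 ≤ C)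
    (hδ : 0 ≤ δ) (u w b : ι → ℝ) (hS : (C ^ 2 - 1) * δ ^ 2 ≤ ∑ i, (u i - w i) ^ 2)
    (hA : ∑ i, (u i - b i) ^ 2 ≤ 2 * δ ^ 2) :
    Measure.pi (fun _ : ι => gaussianReal 0 ⟨σ ^ 2, sq_nonneg σ⟩)
        {ξ | ∑ i, (b i + ξ i - w i) ^ 2 ≤ ∑ i, (b i + ξ i - u i) ^ 2}
      ≤ ENNReal.ofReal (exp (-(Lconst C σ B) * δ ^ 2)) := by
  -- instance search does not unify `gaussianReal 0 v` with the anonymous constructor for `v`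
  have := instIsProbabilityMeasureGaussianReal 0 ⟨σ ^ 2, sq_nonneg σ⟩
  have hgap := sqrt_sub_two_mul_sqrt_ge (by linarith) hδ hS hA
  have hρ : 0 ≤ (√(C ^ 2 - 1) - 2 * √2) * δ :=
    mul_nonneg (sub_nonneg.mpr (two_mul_sqrt_two_le_sqrt_sq_sub_one hC)) hδ
  rw [← ofReal_measureReal]
  refine ENNReal.ofReal_le_ofReal
    ((measureReal_pi_gaussianReal_sum_sq_le_le _ u w b (by linarith)).trans ?_)
  rw [exp_le_exp, neg_mul, neg_le_neg_iff]
  exact Lconst_mul_sq_le_sq_div hρ hgap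

lemma dist2_comm {X : Type*} [MeasurableSpace X] (μ : Measure X) (f g : X → ℝ) :
    dist2 μ f g = dist2 μ g f := by
  simp only [dist2, ← neg_sub (f _), neg_sq]

lemma dist2_sq {X : Type*} [MeasurableSpace X] (μ : Measure X) (f g : X → ℝ) :
    dist2 μ f g ^ 2 = ∫ x, (f x - g x) ^ 2 ∂μ :=
  sq_sqrt (integral_nonneg fun _ => sq_nonneg _)

lemma sq_sub_le_four_mul_sq {a b B : ℝ} (ha : |a| ≤ B) (hb : |b| ≤ B) :
    (a - b) ^ 2 ≤ 4 * B ^ 2 := by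
  obtain ⟨ha₁, ha₂⟩ := abs_le.mp ha
  obtain ⟨hb₁, hb₂⟩ := abs_le.mp hb
  nlinarith

section Regression

variable {X : Type*} [MeasurableSpace X] {μ : Measure X} [IsProbabilityMeasure μ] {n : ℕ}
  {B C δ : ℝ} {f g : X → ℝ}

lemma measure_pi_sum_sq_sub_le_le (hB : 0 < B) (hf : Measurable f) (hfB : ∀ x, |f x| ≤ B)
    (hg : Measurable g) (hgB : ∀ x, |g x| ≤ B) (hC : 1 ≤ C)
    (hfg : C ^ 2 * δ ^ 2 ≤ n * dist2 μ f g ^ 2) :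
    Measure.pi (fun _ : Fin n => μ) {x | ∑ i, (f (x i) - g (x i)) ^ 2 ≤ (C ^ 2 - 1) * δ ^ 2}
      ≤ ENNReal.ofReal (exp (-(1 / (16 * B ^ 2 * C ^ 2) * δ ^ 2))) := by
  rw [← ofReal_measureReal]
  gcongr
  convert measureReal_pi_sum_le_sq_sub_one_mul_le (κ := μ) (ι := Fin n) (δ := δ)
    (h := fun a => (f a - g a) ^ 2)
    (by fun_prop) (fun a => sq_nonneg _) (fun a => sq_sub_le_four_mul_sq (hfB a) (hgB a))
    (by positivity) hC (by simpa [dist2_sq] using hfg) using 4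
  ring

lemma measure_pi_sum_sq_sub_ge_le (hB : 0 < B) (hf : Measurable f) (hfB : ∀ x, |f x| ≤ B)
    (hg : Measurable g) (hgB : ∀ x, |g x| ≤ B) (hfg : n * dist2 μ f g ^ 2 ≤ δ ^ 2) :
    Measure.pi (fun _ : Fin n => μ) {x | 2 * δ ^ 2 ≤ ∑ i, (f (x i) - g (x i)) ^ 2}
      ≤ ENNReal.ofReal (exp (-(1 / (16 * B ^ 2) * δ ^ 2))) := by
  rw [← ofReal_measureReal]
  gcongr
  convert measureReal_pi_sum_ge_two_mul_le (κ := μ) (ι := Fin n) (δ := δ)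
    (h := fun a => (f a - g a) ^ 2)
    (by fun_prop) (fun a => sq_nonneg _) (fun a => sq_sub_le_four_mul_sq (hfB a) (hgB a))
    (by positivity) (by simpa [dist2_sq] using hfg) using 4
  ring

lemma ofReal_exp_neg_mul_sq_le {L r : ℝ} (h : L ≤ r) (δ : ℝ) :
    ENNReal.ofReal (exp (-(r * δ ^ 2))) ≤ ENNReal.ofReal (exp (-L * δ ^ 2)) := by
  rw [neg_mul]
  gcongr

theorem jointLaw_test_error_le {σ : ℝ} (hB : 0 < B) (hC : 3 ≤ C) (hδ : 0 ≤ δ)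
    {fbar : X → ℝ} (hf : Measurable f) (hfB : ∀ x, |f x| ≤ B) (hg : Measurable g)
    (hgB : ∀ x, |g x| ≤ B) (hfbar : Measurable fbar) (hfbarB : ∀ x, |fbar x| ≤ B)
    (hfg : C ^ 2 * δ ^ 2 ≤ n * dist2 μ f g ^ 2) (hnear : n * dist2 μ f fbar ^ 2 ≤ δ ^ 2) :
    jointLaw μ σ n fbar
        {dat | ∑ i, (dat.2 i - g (dat.1 i)) ^ 2 ≤ ∑ i, (dat.2 i - f (dat.1 i)) ^ 2}
      ≤ ENNReal.ofReal (3 * exp (-(Lconst C σ B) * δ ^ 2)) := by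
  set e := ENNReal.ofReal (exp (-(Lconst C σ B) * δ ^ 2))
  set πμ := Measure.pi fun _ : Fin n => μ
  set πν := Measure.pi fun _ : Fin n => gaussianReal 0 ⟨σ ^ 2, sq_nonneg σ⟩
  set sepFails := {x : Fin n → X | ∑ i, (f (x i) - g (x i)) ^ 2 ≤ (C ^ 2 - 1) * δ ^ 2}
  set nearFails := {x : Fin n → X | 2 * δ ^ 2 ≤ ∑ i, (f (x i) - fbar (x i)) ^ 2}
  set T : (Fin n → X) × (Fin n → ℝ) → (Fin n → X) × (Fin n → ℝ) :=
    fun p => (p.1, fun i => fbar (p.1 i) + p.2 i)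
  set E := {dat : (Fin n → X) × (Fin n → ℝ) |
    ∑ i, (dat.2 i - g (dat.1 i)) ^ 2 ≤ ∑ i, (dat.2 i - f (dat.1 i)) ^ 2}
  have := instIsProbabilityMeasureGaussianReal 0 ⟨σ ^ 2, sq_nonneg σ⟩
  have hT : Measurable T := by fun_prop
  have hE : MeasurableSet E := measurableSet_le (by fun_prop) (by fun_prop)
  have hslice : ∀ x, πν (Prod.mk x ⁻¹' (T ⁻¹' E)) ≤ (sepFails ∪ nearFails).indicator 1 x + e := by
    intro x
    by_cases hx : x ∈ sepFails ∪ nearFails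
    · rw [Set.indicator_of_mem hx, Pi.one_apply]
      exact prob_le_one.trans le_self_add
    simp only [Set.mem_union, Set.mem_ofPred_eq, not_or, not_le, sepFails, nearFails] at hx
    exact le_add_left (measure_pi_gaussianReal_test_le σ B hC hδ (fun i => f (x i))
      (fun i => g (x i)) (fun i => fbar (x i)) hx.1.le hx.2.le)
  have hsepFails : πμ sepFails ≤ e :=
    (measure_pi_sum_sq_sub_le_le hB hf hfB hg hgB (by linarith) hfg).trans <|
      ofReal_exp_neg_mul_sq_le
        (Lconst_le_one_div_sixteen_mul_sq_mul_sq C σ hB (by positivity)) δ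
  have hnearFails : πμ nearFails ≤ e :=
    (measure_pi_sum_sq_sub_ge_le hB hf hfB hfbar hfbarB hnear).trans <|
      ofReal_exp_neg_mul_sq_le (Lconst_le_one_div_sixteen_mul_sq C σ hB) δ
  calc jointLaw μ σ n fbar E = (πμ.prod πν) (T ⁻¹' E) := Measure.map_apply hT hE
    _ = ∫⁻ x, πν (Prod.mk x ⁻¹' (T ⁻¹' E)) ∂πμ := Measure.prod_apply (hT hE)
    _ ≤ ∫⁻ x, ((sepFails ∪ nearFails).indicator 1 x + e) ∂πμ := lintegral_mono hslice
    _ = ∫⁻ x, (sepFails ∪ nearFails).indicator 1 x ∂πμ + e := by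
        rw [lintegral_add_right _ measurable_const, lintegral_const, measure_univ, mul_one]
    _ ≤ πμ sepFails + πμ nearFails + e := by
        gcongr
        exact (lintegral_indicator_one_le _).trans (measure_union_le _ _)
    _ ≤ e + e + e := by gcongr
    _ = ENNReal.ofReal (3 * exp (-(Lconst C σ B) * δ ^ 2)) := by
        rw [← ENNReal.ofReal_add (by positivity) (by positivity),
          ← ENNReal.ofReal_add (by positivity) (by positivity)]
        ring_nf

end Regression

theorem two_point_testing_bounded_general
    {X : Type*} [MeasurableSpace X] (μ : Measure X) [IsProbabilityMeasure μ]
    (σ : ℝ) (n : ℕ)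
    (F : Set (X → ℝ)) (hFmeas : ∀ f ∈ F, Measurable f)
    (B : ℝ) (hB : 0 < B) (hbd : ∀ f ∈ F, ∀ x, |f x| ≤ B)
    (C δ : ℝ) (hC : 3 < C) (hδ : 0 < δ)
    (f : X → ℝ) (hf : f ∈ F) (g : X → ℝ) (hg : g ∈ F)
    (hfg : C ^ 2 * δ ^ 2 ≤ (n : ℝ) * (dist2 μ f g) ^ 2) :
    (∀ fbar ∈ F, (n : ℝ) * (dist2 μ f fbar) ^ 2 < δ ^ 2 →
        jointLaw μ σ n fbar
            {dat | ∑ i, (dat.2 i - g (dat.1 i)) ^ 2 ≤ ∑ i, (dat.2 i - f (dat.1 i)) ^ 2}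
          ≤ ENNReal.ofReal (3 * Real.exp (-(Lconst C σ B) * δ ^ 2))) ∧
    (∀ fbar ∈ F, (n : ℝ) * (dist2 μ g fbar) ^ 2 < δ ^ 2 →
        jointLaw μ σ n fbar
            {dat | ∑ i, (dat.2 i - f (dat.1 i)) ^ 2 < ∑ i, (dat.2 i - g (dat.1 i)) ^ 2}
          ≤ ENNReal.ofReal (3 * Real.exp (-(Lconst C σ B) * δ ^ 2))) := by
  refine ⟨fun fbar hfbar hnear => ?_, fun fbar hfbar hnear => ?_⟩
  · exact jointLaw_test_error_le hB hC.le hδ.le (hFmeas f hf) (hbd f hf) (hFmeas g hg) (hbd g hg)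
      (hFmeas fbar hfbar) (hbd fbar hfbar) hfg hnear.le
  · refine (measure_mono (Set.ofPred_subset_ofPred.mpr fun _ h => h.le)).trans ?_
    exact jointLaw_test_error_le hB hC.le hδ.le (hFmeas g hg) (hbd g hg) (hFmeas f hf) (hbd f hf)
      (hFmeas fbar hfbar) (hbd fbar hfbar) (dist2_comm μ f g ▸ hfg) hnear.le

/-- **Two-point testing bound, bounded case** (Lemma 2.5).  Testing `H₀ : f̄ = f` vs
`H₁ : f̄ = g` where `n‖f − g‖²_{L2(P_X)} ≥ C²δ²` for some `C > 3`, the test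
`ψ(Y⃗) = 1(‖Y⃗ − f(X⃗)‖₂² ≥ ‖Y⃗ − g(X⃗)‖₂²)` has both error probabilities (uniformly over true
regression functions `f̄` that are `δ/√n`-close to `f`, resp. to `g`) bounded by
`3 exp(−L(C,σ,B_F) δ²)`. -/
theorem two_point_testing_bounded
    {X : Type*} [MeasurableSpace X] (μ : Measure X) [IsProbabilityMeasure μ]
    (σ : ℝ) (hσ : 0 < σ) (n : ℕ)
    (F : Set (X → ℝ)) (hFconv : Convex ℝ F) (hFmeas : ∀ f ∈ F, Measurable f)
    (B : ℝ) (hB : 0 < B) (hbd : ∀ f ∈ F, ∀ x, |f x| ≤ B)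
    (C δ : ℝ) (hC : 3 < C) (hδ : 0 < δ)
    (f : X → ℝ) (hf : f ∈ F) (g : X → ℝ) (hg : g ∈ F)
    (hfg : C ^ 2 * δ ^ 2 ≤ (n : ℝ) * (dist2 μ f g) ^ 2) :
    (∀ fbar ∈ F, (n : ℝ) * (dist2 μ f fbar) ^ 2 < δ ^ 2 →
        jointLaw μ σ n fbar
            {dat | ∑ i, (dat.2 i - g (dat.1 i)) ^ 2 ≤ ∑ i, (dat.2 i - f (dat.1 i)) ^ 2}
          ≤ ENNReal.ofReal (3 * Real.exp (-(Lconst C σ B) * δ ^ 2))) ∧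
    (∀ fbar ∈ F, (n : ℝ) * (dist2 μ g fbar) ^ 2 < δ ^ 2 →
        jointLaw μ σ n fbar
            {dat | ∑ i, (dat.2 i - f (dat.1 i)) ^ 2 < ∑ i, (dat.2 i - g (dat.1 i)) ^ 2}
          ≤ ENNReal.ofReal (3 * Real.exp (-(Lconst C σ B) * δ ^ 2))) :=
  two_point_testing_bounded_general μ σ n F hFmeas B hB hbd C δ hC hδ f hf g hg hfg

end
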